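/- arXiv:1405.1484 — 5 statements merged into one kernel-verified Lean document; each statement's English description precedes it below -/
import Mathlib

section
/- Let n ≥ 3 be a prime and let G be the graph of Construction 1. For each i ∈ [n−1], the set Q_i = {w_{i,1},…,w_{i,n}} is an independent set of the square G² of G; that is, no two distinct vertices of Q_i have a common neighbor in G. -/
open SimpleGraph

/-- Entry of the Latin square `L_i`:  `L_i(j,k) ≡ j + i·(k-1) (mod n)`, with
indices and entries taken in `ZMod n` (identifying `[n] = {1,…,n}` with `ZMod n`). -/
def latinL (n : ℕ) (i j k : ZMod n) : ZMod n := j + i * (k - 1)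

/-- The vertices of the graph `G` of Construction 1:
`pv k m l` is `v_{k,m}^l ∈ P`, `qv i j` is `w_{i,j} ∈ Q` (with `i ≠ 0`, i.e. `i ∈ [n-1]`),
`rv i j` is `u_{i,j} ∈ R`, and `sv m` is `s_m ∈ S`. -/
inductive Vert (n : ℕ) : Type
  | pv (k m l : ZMod n) : Vert n
  | qv (i : {x : ZMod n // x ≠ 0}) (j : ZMod n) : Vert n
  | rv (i : {x : ZMod n // x ≠ 0}) (j : ZMod n) : Vert n
  | sv (m : ZMod n) : Vert n

/-- One-directional description of the edges of Construction 1: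
`w_{i,j}` is adjacent to `v_{k, L_i(j,k)}^l` for all `k, l`;
`u_{i,j}` is adjacent to every vertex of `T_{l, L_i(j,l)}` for every `l`;
`s_m` is adjacent to every vertex of `T_{l,m}` for every `l`. -/
def rel {n : ℕ} : Vert n → Vert n → Prop
  | .qv i j, .pv k m _ => m = latinL n i.1 j k
  | .rv i j, .pv _ m l => m = latinL n i.1 j l
  | .sv m', .pv _ m _ => m = m'
  | _, _ => False

/-- The bipartite graph `G` of Construction 1. -/
def GraphG (n : ℕ) : SimpleGraph (Vert n) where
  Adj x y := rel x y ∨ rel y x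
  symm := ⟨fun _ _ h => h.symm⟩
  loopless := ⟨by intro x h; cases x <;> simp [rel] at h⟩

/-- The square `G²` of a graph `G`: two distinct vertices are adjacent iff
their distance in `G` is at most 2 (i.e. they are adjacent or have a common neighbor). -/
def square {V : Type*} (G : SimpleGraph V) : SimpleGraph V where
  Adj x y := x ≠ y ∧ (G.Adj x y ∨ ∃ z, G.Adj x z ∧ G.Adj z y)
  symm := ⟨by
    rintro x y ⟨hxy, h | ⟨z, h1, h2⟩⟩
    · exact ⟨hxy.symm, Or.inl h.symm⟩
    · exact ⟨hxy.symm, Or.inr ⟨z, h2.symm, h1.symm⟩⟩⟩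
  loopless := ⟨fun x h => h.1 rfl⟩

/-- `P_k^l = {v_{k,1}^l, …, v_{k,n}^l}`. -/
def Pkl (n : ℕ) (k l : ZMod n) : Set (Vert n) := {x | ∃ m, x = Vert.pv k m l}

/-- `P^l = P_1^l ∪ ⋯ ∪ P_n^l`. -/
def PlSet (n : ℕ) (l : ZMod n) : Set (Vert n) := {x | ∃ k m, x = Vert.pv k m l}

/-- `P = P^1 ∪ ⋯ ∪ P^n`. -/
def Pset (n : ℕ) : Set (Vert n) := {x | ∃ k m l, x = Vert.pv k m l}

/-- `T_{l,m} = {v_{1,m}^l, …, v_{n,m}^l}`. -/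
def Tlm (n : ℕ) (l m : ZMod n) : Set (Vert n) := {x | ∃ k, x = Vert.pv k m l}

/-- `Q_i = {w_{i,1}, …, w_{i,n}}`. -/
def QiSet (n : ℕ) (i : {x : ZMod n // x ≠ 0}) : Set (Vert n) := {x | ∃ j, x = Vert.qv i j}

/-- `Q = Q_1 ∪ ⋯ ∪ Q_{n-1}`. -/
def Qset (n : ℕ) : Set (Vert n) := {x | ∃ i j, x = Vert.qv i j}

/-- `R_i = {u_{i,1}, …, u_{i,n}}`. -/
def RiSet (n : ℕ) (i : {x : ZMod n // x ≠ 0}) : Set (Vert n) := {x | ∃ j, x = Vert.rv i j}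

/-- `R = R_1 ∪ ⋯ ∪ R_{n-1}`. -/
def Rset (n : ℕ) : Set (Vert n) := {x | ∃ i j, x = Vert.rv i j}

/-- `S = {s_1, …, s_n}`. -/
def Sset (n : ℕ) : Set (Vert n) := {x | ∃ m, x = Vert.sv m}

/-- `G_l`, the subgraph of `G` induced by `P^l ∪ Q` (kept on the same vertex type:
all edges of `G` with both endpoints in `P^l ∪ Q`). -/
def Gl (n : ℕ) (l : ZMod n) : SimpleGraph (Vert n) where
  Adj x y := (GraphG n).Adj x y ∧ x ∈ PlSet n l ∪ Qset n ∧ y ∈ PlSet n l ∪ Qset n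
  symm := ⟨fun _ _ ⟨h, hx, hy⟩ => ⟨h.symm, hy, hx⟩⟩
  loopless := ⟨fun x h => (GraphG n).irrefl h.1⟩

/-- `G` is `k`-choosable: for every list assignment with all lists of size at least `k`
there is a proper coloring choosing each color from the corresponding list. -/
def Choosable {V : Type*} (G : SimpleGraph V) (k : ℕ) : Prop :=
  ∀ L : V → Finset ℕ, (∀ v, k ≤ (L v).card) →
    ∃ φ : V → ℕ, (∀ v, φ v ∈ L v) ∧ ∀ ⦃v w⦄, G.Adj v w → φ v ≠ φ w

/-- The list chromatic number `χ_ℓ(G)`: the least `k` such that `G` is `k`-choosable. -/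
noncomputable def listChromaticNumber {V : Type*} (G : SimpleGraph V) : ℕ :=
  sInf {k | Choosable G k}

theorem latinL_left_injective (n : ℕ) (i k : ZMod n) : Function.Injective fun j => latinL n i j k :=
  fun _ _ h => add_right_cancel h

theorem GraphG_adj_qv_iff {n : ℕ} (i : {x : ZMod n // x ≠ 0}) (j : ZMod n) (z : Vert n) :
    (GraphG n).Adj (.qv i j) z ↔ ∃ k l, z = .pv k (latinL n i.1 j k) l := by
  cases z <;> simp [GraphG, rel, eq_comm]

theorem GraphG_not_adj_qv_qv {n : ℕ} (i i' : {x : ZMod n // x ≠ 0}) (j j' : ZMod n) :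
    ¬ (GraphG n).Adj (.qv i j) (.qv i' j') := by
  simp [GraphG_adj_qv_iff]

theorem GraphG_eq_of_adj_qv_of_adj_qv {n : ℕ} {i : {x : ZMod n // x ≠ 0}} {j j' : ZMod n}
    {z : Vert n} (h : (GraphG n).Adj (.qv i j) z) (h' : (GraphG n).Adj (.qv i j') z) : j = j' := by
  obtain ⟨k, l, rfl⟩ := (GraphG_adj_qv_iff i j z).1 h
  obtain ⟨k', l', hz⟩ := (GraphG_adj_qv_iff i j' _).1 h'
  obtain ⟨rfl, hm, -⟩ := Vert.pv.inj hz
  exact latinL_left_injective n i.1 k hm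

theorem square_not_adj_of_not_adj_of_forall {V : Type*} {G : SimpleGraph V} {x y : V}
    (hxy : ¬ G.Adj x y) (hcommon : ∀ z, G.Adj x z → ¬ G.Adj z y) : ¬ (square G).Adj x y := by
  rintro ⟨-, h | ⟨z, hxz, hzy⟩⟩
  exacts [hxy h, hcommon z hxz hzy]

theorem stmt_7_general (n : ℕ) (i : {x : ZMod n // x ≠ 0}) :
    ∀ x ∈ QiSet n i, ∀ y ∈ QiSet n i, x ≠ y →
      ¬ (square (GraphG n)).Adj x y ∧
      ¬ ∃ z, (GraphG n).Adj x z ∧ (GraphG n).Adj y z := by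
  rintro x ⟨j, rfl⟩ y ⟨j', rfl⟩ hxy
  have hjj' : j ≠ j' := fun h => hxy (h ▸ rfl)
  refine ⟨square_not_adj_of_not_adj_of_forall (GraphG_not_adj_qv_qv i i j j') ?_, ?_⟩
  · exact fun z hz hz' => hjj' (GraphG_eq_of_adj_qv_of_adj_qv hz hz'.symm)
  · exact fun ⟨z, hz, hz'⟩ => hjj' (GraphG_eq_of_adj_qv_of_adj_qv hz hz')

/-- each `Q_i` is an independent set of `G²`: distinct vertices of `Q_i`
are non-adjacent in `G²`, i.e. they have no common neighbor in `G`. -/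
theorem stmt_7 (n : ℕ) (hn : n.Prime) (hn3 : 3 ≤ n) (i : {x : ZMod n // x ≠ 0}) :
    ∀ x ∈ QiSet n i, ∀ y ∈ QiSet n i, x ≠ y →
      ¬ (square (GraphG n)).Adj x y ∧
      ¬ ∃ z, (GraphG n).Adj x z ∧ (GraphG n).Adj y z :=
  stmt_7_general n i
end

section
/- Let n ≥ 3 be a prime and let G be the graph of Construction 1. The set S = {s_1,…,s_n} is an independent set of the square G² of G; that is, no two distinct vertices of S have a common neighbor in G. -/
open SimpleGraph

theorem not_square_adj_of_not_adj_of_no_common_neighbor {V : Type*} {G : SimpleGraph V}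
    {x y : V} (hxy : ¬G.Adj x y) (hcommon : ¬∃ z, G.Adj x z ∧ G.Adj y z) :
    ¬(square G).Adj x y := by
  rintro ⟨-, hadj | ⟨z, hxz, hzy⟩⟩
  · exact hxy hadj
  · exact hcommon ⟨z, hxz, hzy.symm⟩

theorem GraphG_adj_sv_iff {n : ℕ} {m : ZMod n} {z : Vert n} :
    (GraphG n).Adj (.sv m) z ↔ ∃ k l, z = .pv k m l := by
  cases z <;> simp [GraphG, rel, eq_comm]

theorem not_GraphG_adj_sv_sv {n : ℕ} (a b : ZMod n) : ¬(GraphG n).Adj (.sv a) (.sv b) := by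
  simp [GraphG_adj_sv_iff]

theorem GraphG_sv_no_common_neighbor {n : ℕ} {a b : ZMod n} (hab : a ≠ b) :
    ¬∃ z, (GraphG n).Adj (.sv a) z ∧ (GraphG n).Adj (.sv b) z := by
  rintro ⟨z, hza, hzb⟩
  obtain ⟨k, l, rfl⟩ := GraphG_adj_sv_iff.mp hza
  obtain ⟨k', l', hz⟩ := GraphG_adj_sv_iff.mp hzb
  exact hab (Vert.pv.inj hz).2.1

theorem stmt_9_general (n : ℕ) :
    ∀ x ∈ Sset n, ∀ y ∈ Sset n, x ≠ y →
      ¬ (square (GraphG n)).Adj x y ∧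
      ¬ ∃ z, (GraphG n).Adj x z ∧ (GraphG n).Adj y z := by
  rintro _ ⟨a, rfl⟩ _ ⟨b, rfl⟩ hxy
  have hab : a ≠ b := by rintro rfl; exact hxy rfl
  have hcommon := GraphG_sv_no_common_neighbor hab
  exact ⟨not_square_adj_of_not_adj_of_no_common_neighbor (not_GraphG_adj_sv_sv a b) hcommon,
    hcommon⟩

/-- `S` is an independent set of `G²`: distinct vertices of `S`
are non-adjacent in `G²`, i.e. they have no common neighbor in `G`. -/
theorem stmt_9 (n : ℕ) (hn : n.Prime) (hn3 : 3 ≤ n) :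
    ∀ x ∈ Sset n, ∀ y ∈ Sset n, x ≠ y →
      ¬ (square (GraphG n)).Adj x y ∧
      ¬ ∃ z, (GraphG n).Adj x z ∧ (GraphG n).Adj y z :=
  stmt_9_general n
end

section
/- Let n ≥ 3 be a prime and let G be the graph of Construction 1. Then the chromatic number of the square of G satisfies χ(G²) ≤ n² + 2n − 1. -/
open SimpleGraph

/-!
A proper colouring of `G` that is injective on every neighbourhood is a proper colouring of `G²`.
Colour `v_{k,m}^l` by `(k,l)`, `w_{i,j}` and `u_{i,j}` by `i` (from two disjoint palettes), and all
of `S` by one further colour, which makes `n² + 2(n-1) + 1` colours. A vertex of `Q ∪ R ∪ S` meets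
each `P_k^l` at most once; a vertex `v_{k,m}^l` meets each `Q_i` and `R_i` at most once because
the rows of the Latin square `L_i` are injective, and meets `S` once.
-/

def SimpleGraph.Coloring.squareOfInjOn {V α : Type*} {G : SimpleGraph V} (C : G.Coloring α)
    (hC : ∀ z, Set.InjOn C (G.neighborSet z)) : (square G).Coloring α :=
  Coloring.mk C fun {x y} ⟨hne, h⟩ => by
    rcases h with h | ⟨z, hxz, hzy⟩
    · exact C.valid h
    · exact fun hc => hne (hC z hxz.symm hzy hc)

theorem latinL_left_inj {n : ℕ} {i j j' k : ZMod n} :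
    latinL n i j k = latinL n i j' k ↔ j = j' :=
  add_left_inj _

namespace GraphG

variable {n : ℕ}

abbrev Color (n : ℕ) : Type :=
  (ZMod n × ZMod n) ⊕ ({x : ZMod n // x ≠ 0} ⊕ ({x : ZMod n // x ≠ 0} ⊕ Unit))

def color : Vert n → Color n
  | .pv k _ l => .inl (k, l)
  | .qv i _ => .inr (.inl i)
  | .rv i _ => .inr (.inr (.inl i))
  | .sv _ => .inr (.inr (.inr ()))

theorem card_color [NeZero n] : Fintype.card (Color n) = n ^ 2 + 2 * n - 1 := by
  have h_nonzero : Fintype.card {x : ZMod n // x ≠ 0} = n - 1 := by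
    rw [Fintype.card_subtype_compl, ZMod.card, Fintype.card_subtype_eq]
  have : 1 ≤ n := Nat.one_le_iff_ne_zero.mpr (NeZero.ne n)
  simp only [Fintype.card_sum, Fintype.card_prod, ZMod.card, Fintype.card_unit, h_nonzero, sq]
  omega

-- `rel` only leads from `Q ∪ R ∪ S` into `P`, so `G` is bipartite.
theorem not_rel_of_rel {x y z : Vert n} (h : rel x y) : ¬ rel y z := by
  cases x <;> cases y <;> cases z <;> simp_all [rel]

theorem color_ne_of_rel {x y : Vert n} (h : rel x y) : color x ≠ color y := by
  cases x <;> cases y <;> simp_all [rel, color]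

theorem eq_of_color_eq_of_rel_left {x y z : Vert n} (hx : rel z x) (hy : rel z y)
    (hc : color x = color y) : x = y := by
  cases x <;> cases y <;> cases z <;> simp_all [rel, color]

theorem eq_of_color_eq_of_rel_right {x y z : Vert n} (hx : rel x z) (hy : rel y z)
    (hc : color x = color y) : x = y := by
  cases x <;> cases y <;> cases z <;> simp_all [rel, color, latinL_left_inj]

def coloring (n : ℕ) : (GraphG n).Coloring (Color n) :=
  Coloring.mk color fun h => h.elim color_ne_of_rel fun h' => (color_ne_of_rel h').symm

theorem coloring_injOn_neighborSet (z : Vert n) :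
    Set.InjOn (coloring n) ((GraphG n).neighborSet z) := by
  rintro x (hx | hx) y (hy | hy) hc
  · exact eq_of_color_eq_of_rel_left hx hy hc
  · exact absurd hx (not_rel_of_rel hy)
  · exact absurd hy (not_rel_of_rel hx)
  · exact eq_of_color_eq_of_rel_right hx hy hc

end GraphG

theorem stmt_15_general (n : ℕ) (hn : n.Prime) :
    (square (GraphG n)).chromaticNumber ≤ (n ^ 2 + 2 * n - 1 : ℕ) := by
  have : NeZero n := ⟨hn.ne_zero⟩
  rw [← GraphG.card_color]
  exact ((GraphG.coloring n).squareOfInjOn GraphG.coloring_injOn_neighborSet).colorable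
    |>.chromaticNumber_le

/-- `χ(G²) ≤ n² + 2n - 1`. -/
theorem stmt_15 (n : ℕ) (hn : n.Prime) (hn3 : 3 ≤ n) :
    (square (GraphG n)).chromaticNumber ≤ (n ^ 2 + 2 * n - 1 : ℕ) :=
  stmt_15_general n hn
end

section
/- Let n ≥ 3 be a prime and let G be the graph of Construction 1. Then the list chromatic number of the square of G satisfies χ_ℓ(G²) > 2(n−1)². -/
open SimpleGraph

/-!
Give `v_{k,m}^l` the list of all colors below `2(n-1)n` that are not `≡ m (mod n)`; these lists
have size `2(n-1)²`. Two vertices of `P` in different parts `P_k^l` are at distance at most 2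
in `G` (through some `s_m`, `u_{i,j}` or `w_{i,j}`, since `n` is prime), so the `n²` parts get
pairwise disjoint sets of colors. A part colored by a single color `c` would have to color
`v_{k, c mod n}^l` with `c`, which is not on its list, so every part uses two colors: `2n²` colors in
all, but only `2(n-1)n` are available.
-/

open Finset

section ListColoring

variable {V : Type*} (G : SimpleGraph V)

def IsListColoring (L : V → Finset ℕ) (φ : V → ℕ) : Prop :=
  (∀ v, φ v ∈ L v) ∧ ∀ ⦃v w⦄, G.Adj v w → φ v ≠ φ w

theorem choosable_card [Fintype V] : Choosable G (Fintype.card V) := by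
  classical
  intro L hL
  obtain ⟨φ, hφ_inj, hφ_mem⟩ :=
    (all_card_le_biUnion_card_iff_exists_injective L).1 fun s => by
      rcases s.eq_empty_or_nonempty with rfl | ⟨v, hv⟩
      · simp
      · exact (card_le_univ s).trans <| (hL v).trans <| card_le_card <| subset_biUnion_of_mem L hv
  exact ⟨φ, hφ_mem, fun v w h => hφ_inj.ne h.ne⟩

theorem lt_listChromaticNumber [Finite V] {b : ℕ} (L : V → Finset ℕ) (hL : ∀ v, b ≤ #(L v))
    (hL_bad : ∀ φ, ¬ IsListColoring G L φ) : b < listChromaticNumber G := by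
  have := Fintype.ofFinite V
  refine le_csInf (s := {k | Choosable G k}) ⟨_, choosable_card G⟩ fun k hk => ?_
  by_contra! hkb
  obtain ⟨φ, hφ⟩ := hk L fun v => (Nat.le_of_lt_succ hkb).trans (hL v)
  exact hL_bad φ hφ

end ListColoring

theorem two_mul_card_le_of_separated {V ι : Type*} [Fintype ι] (π : V → ι) (φ : V → ℕ)
    {C : Finset ℕ} (hC : ∀ v, φ v ∈ C) (hsep : ∀ v w, π v ≠ π w → φ v ≠ φ w)
    (htwo : ∀ i, ∃ v w, π v = i ∧ π w = i ∧ φ v ≠ φ w) : 2 * Fintype.card ι ≤ #C := by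
  classical
  set T : ι → Finset ℕ := fun i => {c ∈ C | ∃ v, π v = i ∧ φ v = c}
  have hT_two : ∀ i, 2 ≤ #(T i) := fun i => by
    obtain ⟨v, w, hv, hw, hvw⟩ := htwo i
    exact one_lt_card.2 ⟨φ v, mem_filter.2 ⟨hC v, v, hv, rfl⟩,
      φ w, mem_filter.2 ⟨hC w, w, hw, rfl⟩, hvw⟩
  have hT_disj : (↑(univ : Finset ι) : Set ι).PairwiseDisjoint T := by
    intro i _ j _ hij
    refine disjoint_left.2 ?_
    rintro _ hi hj
    obtain ⟨-, v, rfl, rfl⟩ := mem_filter.1 hi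
    obtain ⟨-, w, rfl, hwv⟩ := mem_filter.1 hj
    exact hsep v w hij hwv.symm
  calc 2 * Fintype.card ι = ∑ _i : ι, 2 := by simp [mul_comm]
    _ ≤ ∑ i, #(T i) := sum_le_sum fun i _ => hT_two i
    _ = #(univ.biUnion T) := (card_biUnion hT_disj).symm
    _ ≤ #C := card_le_card <| biUnion_subset.2 fun i _ => filter_subset _ _

theorem card_filter_natCast_ne {n : ℕ} [NeZero n] (a : ℕ) (m : ZMod n) :
    #{c ∈ range (a * n) | ((c : ℕ) : ZMod n) ≠ m} = a * (n - 1) := by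
  have hcount : #{c ∈ range (a * n) | ((c : ℕ) : ZMod n) = m} = a := by
    rw [← ZMod.natCast_zmod_val m]
    simp_rw [ZMod.natCast_eq_natCast_iff, ← Nat.count_eq_card_filter_range,
      Nat.count_modEq_card _ (Nat.pos_of_neZero n), Nat.mul_mod_left,
      Nat.mul_div_cancel _ (Nat.pos_of_neZero n)]
    simp
  have hsplit := card_filter_add_card_filter_not (s := range (a * n))
    (fun c : ℕ => (c : ZMod n) = m)
  rw [hcount, card_range] at hsplit
  simp only [← ne_eq] at hsplit
  rw [Nat.mul_sub_one]
  omega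

theorem exists_latinL_eq_of_ne {n : ℕ} (hn : n.Prime) {a a' m m' : ZMod n} (ha : a ≠ a')
    (hm : m ≠ m') : ∃ (i : {x : ZMod n // x ≠ 0}) (j : ZMod n),
      m = latinL n i.1 j a ∧ m' = latinL n i.1 j a' := by
  have := Fact.mk hn
  have ha' : a - a' ≠ 0 := sub_ne_zero.2 ha
  refine ⟨⟨(m - m') / (a - a'), div_ne_zero (sub_ne_zero.2 hm) ha'⟩,
    m - (m - m') / (a - a') * (a - 1), ?_, ?_⟩ <;> simp only [latinL] <;> field_simp <;> ring

theorem square_adj_pv {n : ℕ} (hn : n.Prime) {k m l k' m' l' : ZMod n}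
    (h : (k, l) ≠ (k', l')) : (square (GraphG n)).Adj (.pv k m l) (.pv k' m' l') := by
  refine ⟨fun he => h (by cases he; rfl), Or.inr ?_⟩
  by_cases hm : m = m'
  · exact ⟨.sv m', Or.inr hm, Or.inl rfl⟩
  by_cases hk : k = k'
  · obtain ⟨i, j, h₁, h₂⟩ := exists_latinL_eq_of_ne hn (fun hl : l = l' => h (by rw [hk, hl])) hm
    exact ⟨.rv i j, Or.inr h₁, Or.inl h₂⟩
  · obtain ⟨i, j, h₁, h₂⟩ := exists_latinL_eq_of_ne hn hk hm
    exact ⟨.qv i j, Or.inr h₁, Or.inl h₂⟩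

instance (n : ℕ) [NeZero n] : Finite (Vert n) :=
  Finite.of_surjective
    (fun x : (ZMod n × ZMod n × ZMod n) ⊕ ({x : ZMod n // x ≠ 0} × ZMod n)
        ⊕ ({x : ZMod n // x ≠ 0} × ZMod n) ⊕ ZMod n =>
      match x with
      | .inl (k, m, l) => .pv k m l
      | .inr (.inl (i, j)) => .qv i j
      | .inr (.inr (.inl (i, j))) => .rv i j
      | .inr (.inr (.inr m)) => .sv m)
    (by
      rintro (⟨k, m, l⟩ | ⟨i, j⟩ | ⟨i, j⟩ | m)
      exacts [⟨.inl (k, m, l), rfl⟩, ⟨.inr (.inl (i, j)), rfl⟩, ⟨.inr (.inr (.inl (i, j))), rfl⟩,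
        ⟨.inr (.inr (.inr m)), rfl⟩])

def badList (n : ℕ) : Vert n → Finset ℕ
  | .pv _ m _ => {c ∈ range (2 * (n - 1) * n) | (c : ZMod n) ≠ m}
  | _ => range (2 * (n - 1) ^ 2)

theorem card_badList {n : ℕ} [NeZero n] (v : Vert n) : #(badList n v) = 2 * (n - 1) ^ 2 := by
  cases v with
  | pv => simp only [badList, card_filter_natCast_ne]; ring
  | _ => simp only [badList, card_range]

theorem not_isListColoring_badList {n : ℕ} (hn : n.Prime) (φ : Vert n → ℕ) :
    ¬ IsListColoring (square (GraphG n)) (badList n) φ := by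
  have : NeZero n := ⟨hn.ne_zero⟩
  rintro ⟨hφ_mem, hφ_proper⟩
  have hφ_lt : ∀ k m l, φ (.pv k m l) ∈ range (2 * (n - 1) * n) :=
    fun k m l => (mem_filter.1 (hφ_mem (.pv k m l))).1
  have hφ_ne : ∀ k m l, (φ (.pv k m l) : ZMod n) ≠ m :=
    fun k m l => (mem_filter.1 (hφ_mem (.pv k m l))).2
  have hpart_two : ∀ k l, φ (.pv k (φ (.pv k 0 l)) l) ≠ φ (.pv k 0 l) :=
    fun k l he => hφ_ne k _ l (by rw [he])
  have hcount := two_mul_card_le_of_separated (fun x : ZMod n × ZMod n × ZMod n => (x.1, x.2.2))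
    (fun x => φ (.pv x.1 x.2.1 x.2.2)) (fun x => hφ_lt _ _ _)
    (fun x y hxy => hφ_proper (square_adj_pv hn hxy))
    (fun ⟨k, l⟩ => ⟨(k, _, l), (k, 0, l), rfl, rfl, hpart_two k l⟩)
  simp only [Fintype.card_prod, ZMod.card, card_range] at hcount
  have hn_pos := hn.pos
  nlinarith [Nat.sub_add_cancel hn_pos]

theorem stmt_16_general (n : ℕ) (hn : n.Prime) :
    2 * (n - 1) ^ 2 < listChromaticNumber (square (GraphG n)) :=
  have : NeZero n := ⟨hn.ne_zero⟩
  lt_listChromaticNumber _ (badList n) (fun v => (card_badList v).ge) (not_isListColoring_badList hn)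

/-- `χ_ℓ(G²) > 2(n-1)²`. -/
theorem stmt_16 (n : ℕ) (hn : n.Prime) (hn3 : 3 ≤ n) :
    2 * (n - 1) ^ 2 < listChromaticNumber (square (GraphG n)) :=
  stmt_16_general n hn
end

section
/- Let n ≥ 3 be a prime and let G be the graph of Construction 1. Then G is bipartite with partite sets P and Q ∪ R ∪ S, every vertex x ∈ P has degree 2n − 1 in G, and every vertex y ∈ Q ∪ R ∪ S has degree n² in G. -/
open SimpleGraph

/-!
Every edge of `G` is of the form `rel y x` with `x = v_{k,m}^l ∈ P` and `y ∈ Q ∪ R ∪ S`, and for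
fixed `y` the relation determines `m` as a function of `(k, l)`; so `y` has exactly one neighbour
per pair `(k, l)`. Conversely, since `j ↦ L_i(j, k)` is a bijection, `v_{k,m}^l` has exactly one
neighbour in each `Q_i` and each `R_i`, and one in `S`: `2(n - 1) + 1` in all.
-/

section

variable {n : ℕ}

theorem not_rel_pv (k m l : ZMod n) (y : Vert n) : ¬ rel (.pv k m l) y := by
  cases y <;> simp [rel]

theorem mem_Pset_and_mem_QRS_of_rel {a b : Vert n} (h : rel a b) :
    b ∈ Pset n ∧ a ∈ Qset n ∪ Rset n ∪ Sset n := by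
  rcases a with _ | ⟨i, j⟩ | ⟨i, j⟩ | ⟨m⟩ <;> rcases b with ⟨k, m', l⟩ | _ | _ | _ <;>
    simp only [rel] at h
  · exact ⟨⟨k, m', l, rfl⟩, .inl (.inl ⟨i, j, rfl⟩)⟩
  · exact ⟨⟨k, m', l, rfl⟩, .inl (.inr ⟨i, j, rfl⟩)⟩
  · exact ⟨⟨k, m', l, rfl⟩, .inr ⟨m, rfl⟩⟩

theorem adj_bipartite {x y : Vert n} (h : (GraphG n).Adj x y) :
    (x ∈ Pset n ∧ y ∈ Qset n ∪ Rset n ∪ Sset n) ∨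
      (y ∈ Pset n ∧ x ∈ Qset n ∪ Rset n ∪ Sset n) :=
  h.elim (fun h => .inr (mem_Pset_and_mem_QRS_of_rel h))
    fun h => .inl (mem_Pset_and_mem_QRS_of_rel h)

-- `w_{i,j}` is adjacent to `v_{k,m}^l` iff `j = m - i(k-1)`; likewise `u_{i,j}` iff `j = m - i(l-1)`.
def pvNeighbor (k m l : ZMod n) :
    {i : ZMod n // i ≠ 0} ⊕ {i : ZMod n // i ≠ 0} ⊕ Unit → Vert n
  | .inl i => .qv i (m - i * (k - 1))
  | .inr (.inl i) => .rv i (m - i * (l - 1))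
  | .inr (.inr ()) => .sv m

theorem pvNeighbor_injective (k m l : ZMod n) : (pvNeighbor k m l).Injective := by
  rintro (i | i | ⟨⟩) (i' | i' | ⟨⟩) h <;> simp_all [pvNeighbor]

theorem neighborSet_pv (k m l : ZMod n) :
    (GraphG n).neighborSet (.pv k m l) = Set.range (pvNeighbor k m l) := by
  ext y
  simp only [mem_neighborSet, GraphG, not_rel_pv, false_or]
  constructor
  · intro h
    rcases y with _ | ⟨i, j⟩ | ⟨i, j⟩ | ⟨m'⟩ <;> simp only [rel, latinL] at h
    · exact ⟨.inl i, by simp [pvNeighbor, h]⟩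
    · exact ⟨.inr (.inl i), by simp [pvNeighbor, h]⟩
    · exact ⟨.inr (.inr ()), by simp [pvNeighbor, h]⟩
  · rintro ⟨i | i | ⟨⟩, rfl⟩ <;> simp [pvNeighbor, rel, latinL]

theorem ncard_neighborSet_pv [NeZero n] (k m l : ZMod n) :
    ((GraphG n).neighborSet (.pv k m l)).ncard = 2 * n - 1 := by
  have hcard : Nat.card {i : ZMod n // i ≠ 0} = n - 1 := by
    simp [Nat.card_eq_fintype_card, Fintype.card_subtype_compl, ZMod.card]
  have := NeZero.one_le (n := n)
  rw [neighborSet_pv, Set.ncard_range_of_injective (pvNeighbor_injective k m l),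
    Nat.card_sum, Nat.card_sum, hcard, Nat.card_unique]
  omega

theorem ncard_neighborSet_eq_sq [NeZero n] {y : Vert n} (φ : ZMod n → ZMod n → ZMod n)
    (hφ : ∀ k m l, rel y (.pv k m l) ↔ m = φ k l) :
    ((GraphG n).neighborSet y).ncard = n ^ 2 := by
  have hy : ∀ x, ¬ rel x y := by
    intro x hxy
    obtain ⟨⟨k, m, l, rfl⟩, -⟩ := mem_Pset_and_mem_QRS_of_rel hxy
    exact not_rel_pv k m l _ ((hφ 0 _ 0).2 rfl)
  have hrange : (GraphG n).neighborSet y =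
      Set.range fun p : ZMod n × ZMod n => Vert.pv p.1 (φ p.1 p.2) p.2 := by
    ext x
    constructor
    · intro hx
      have hyx := hx.resolve_right (hy x)
      obtain ⟨⟨k, m, l, rfl⟩, -⟩ := mem_Pset_and_mem_QRS_of_rel hyx
      obtain rfl := (hφ k m l).1 hyx
      exact ⟨(k, l), rfl⟩
    · rintro ⟨⟨k, l⟩, rfl⟩
      exact .inl ((hφ _ _ _).2 rfl)
  have hinj : (fun p : ZMod n × ZMod n => Vert.pv p.1 (φ p.1 p.2) p.2).Injective := by
    rintro ⟨k, l⟩ ⟨k', l'⟩ h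
    simp_all
  rw [hrange, Set.ncard_range_of_injective hinj, Nat.card_prod, Nat.card_zmod, sq]

theorem ncard_neighborSet_of_mem_QRS [NeZero n] {y : Vert n}
    (hy : y ∈ Qset n ∪ Rset n ∪ Sset n) : ((GraphG n).neighborSet y).ncard = n ^ 2 := by
  rcases hy with (⟨i, j, rfl⟩ | ⟨i, j, rfl⟩) | ⟨m, rfl⟩
  · exact ncard_neighborSet_eq_sq (fun k _ => latinL n i j k) fun _ _ _ => Iff.rfl
  · exact ncard_neighborSet_eq_sq (fun _ l => latinL n i j l) fun _ _ _ => Iff.rfl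
  · exact ncard_neighborSet_eq_sq (fun _ _ => m) fun _ _ _ => Iff.rfl

end

theorem stmt_18_general (n : ℕ) (hn : n.Prime) :
    (∀ x y : Vert n, (GraphG n).Adj x y →
      (x ∈ Pset n ∧ y ∈ Qset n ∪ Rset n ∪ Sset n) ∨
      (y ∈ Pset n ∧ x ∈ Qset n ∪ Rset n ∪ Sset n)) ∧
    (∀ x ∈ Pset n, ((GraphG n).neighborSet x).ncard = 2 * n - 1) ∧
    (∀ y ∈ Qset n ∪ Rset n ∪ Sset n, ((GraphG n).neighborSet y).ncard = n ^ 2) := by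
  have : NeZero n := ⟨hn.ne_zero⟩
  refine ⟨fun _ _ => adj_bipartite, ?_, fun _ => ncard_neighborSet_of_mem_QRS⟩
  rintro x ⟨k, m, l, rfl⟩
  exact ncard_neighborSet_pv k m l

/-- `G` is bipartite with partite sets `P` and `Q ∪ R ∪ S` (every edge
joins `P` to `Q ∪ R ∪ S`), every vertex of `P` has degree `2n - 1`, and every vertex of
`Q ∪ R ∪ S` has degree `n²`. -/
theorem stmt_18 (n : ℕ) (hn : n.Prime) (hn3 : 3 ≤ n) :
    (∀ x y : Vert n, (GraphG n).Adj x y →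
      (x ∈ Pset n ∧ y ∈ Qset n ∪ Rset n ∪ Sset n) ∨
      (y ∈ Pset n ∧ x ∈ Qset n ∪ Rset n ∪ Sset n)) ∧
    (∀ x ∈ Pset n, ((GraphG n).neighborSet x).ncard = 2 * n - 1) ∧
    (∀ y ∈ Qset n ∪ Rset n ∪ Sset n, ((GraphG n).neighborSet y).ncard = n ^ 2) :=
  stmt_18_general n hn
end
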